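/- arXiv:1711.06455 — 2 statements merged into one kernel-verified Lean document; each statement's English description precedes it below -/
import Mathlib

section
/- (Resistance between identified well-separated clusters) Let G be a connected weighted graph and C1, C2 disjoint vertex sets such that (i) the effective resistance between any two vertices within C1 is at most R and likewise within C2, and (ii) the effective resistance between every vertex of C1 and every vertex of C2 is at least γR for some γ > 4. Let J be the graph obtained from G by identifying C1 to a single vertex s and C2 to a single vertex t. Then Reff_J(s,t) ≥ (γ - 4) R. -/
open Matrix

/-- The signed indicator vector `χ_x - χ_y`. -/
def incv {V : Type*} [DecidableEq V] (x y : V) : V → ℝ := fun v =>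
  (if v = x then 1 else 0) - (if v = y then 1 else 0)

/-- Weighted Laplacian of the multigraph whose edge `e` has endpoints `a e`, `b e`
and conductance `c e`. -/
noncomputable def lapM {V E : Type*} [DecidableEq V] [Fintype E]
    (a b : E → V) (c : E → ℝ) : Matrix V V ℝ :=
  ∑ e, c e • Matrix.vecMulVec (incv (a e) (b e)) (incv (a e) (b e))

/-- `M` is the Moore–Penrose pseudoinverse of `L`. -/
def IsMPInv {V : Type*} [Fintype V] (L M : Matrix V V ℝ) : Prop :=
  L * M * L = L ∧ M * L * M = M ∧ (L * M)ᵀ = L * M ∧ (M * L)ᵀ = M * L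

/-- Connectivity of a weighted graph, encoded as: the kernel of its Laplacian
consists exactly of the constant vectors. -/
def LapConnected {V : Type*} [Fintype V] (L : Matrix V V ℝ) : Prop :=
  ∀ x : V → ℝ, L.mulVec x = 0 → ∃ t : ℝ, ∀ v, x v = t

/-!
Let `p = L⁺ (χ_u - χ_v)` be the potential of a unit `u`–`v` current, for `u ∈ C1`, `v ∈ C2`.
Polarising the resistance form gives `2 (p u - p x) = Reff(u,x) + Reff(u,v) - Reff(x,v)`, so every
vertex of `C1` lies within `D = (R + Reff(u,v) - γR) / 2` below `p u` and every vertex of `C2`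
within `D` above `p v`. Clamping `p` to `[p v + D, p u - D]` gives a potential that is constant on
each cluster, hence descends to `J`. Clamping is monotone and 1-Lipschitz, so the energy of the
clamped potential is at most its drop `(γ - 1) R`, and the dual characterisation
`Reff_J(s,t) ≥ 2 (q s - q t) - qᵀ L_J q` yields `Reff_J(s,t) ≥ (γ - 1) R ≥ (γ - 4) R`.
-/

section Resistance

variable {V : Type*}

section ClampedPotential

def clampedPotential (lo hi : ℝ) (p : V → ℝ) : V → ℝ := fun x => min hi (max lo (p x))

lemma clampedPotential_eq_hi {lo hi : ℝ} {p : V → ℝ} {x : V} (h : hi ≤ p x) :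
    clampedPotential lo hi p x = hi :=
  min_eq_left (le_max_of_le_right h)

lemma clampedPotential_eq_lo {lo hi : ℝ} {p : V → ℝ} {x : V} (hlohi : lo ≤ hi) (h : p x ≤ lo) :
    clampedPotential lo hi p x = lo := by
  rw [clampedPotential, max_eq_left h, min_eq_right hlohi]

lemma clamp_sub_sq_le (lo hi s t : ℝ) :
    (min hi (max lo s) - min hi (max lo t)) ^ 2
      ≤ (min hi (max lo s) - min hi (max lo t)) * (s - t) := by
  simp only [min_def, max_def]
  split_ifs <;> nlinarith

end ClampedPotential

section PseudoInverse

variable [Fintype V] {L M : Matrix V V ℝ}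

lemma Matrix.IsHermitian.dotProduct_mulVec_comm (hL : L.IsHermitian) (x y : V → ℝ) :
    x ⬝ᵥ L *ᵥ y = y ⬝ᵥ L *ᵥ x := by
  rw [← dotProduct_transpose_mulVec, (isHermitian_iff_isSymm.1 hL).eq]

lemma IsMPInv.mulVec_mulVec_of_sum_eq_zero (hL : L.PosSemidef) (hconn : LapConnected L)
    (hL1 : L *ᵥ 1 = 0) (hM : IsMPInv L M) {β : V → ℝ} (hβ : ∑ v, β v = 0) :
    L *ᵥ M *ᵥ β = β := by
  obtain ⟨hLML, -, hLM_symm, -⟩ := hM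
  -- `L * M` is the orthogonal projection onto the range of `L`, so the residual is `L`-orthogonal
  -- to everything, hence constant; its sum vanishes, so it vanishes.
  set r := L *ᵥ M *ᵥ β - β
  have hr_orth : ∀ z, r ⬝ᵥ L *ᵥ z = 0 := by
    intro z
    rw [sub_dotProduct, sub_eq_zero, mulVec_mulVec, dotProduct_comm,
      ← dotProduct_transpose_mulVec, hLM_symm, mulVec_mulVec, hLML]
  have hLr : L *ᵥ r = 0 := (hL.dotProduct_mulVec_zero_iff r).1 (by simpa using hr_orth r)
  obtain ⟨k, hk⟩ := hconn r hLr
  have hr_sum : ∑ v, r v = 0 := by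
    rw [← one_dotProduct, dotProduct_sub, hL.isHermitian.dotProduct_mulVec_comm, hL1,
      dotProduct_zero, one_dotProduct, hβ, sub_zero]
  funext v
  have : Nonempty V := ⟨v⟩
  have hk0 : k = 0 := by
    simpa [hk, Fintype.card_ne_zero] using hr_sum
  have := hk v
  simp only [r, Pi.sub_apply, hk0] at this
  linarith

lemma two_mul_dotProduct_sub_le (hL : L.PosSemidef) {p β : V → ℝ} (hp : L *ᵥ p = β)
    (q : V → ℝ) : 2 * (β ⬝ᵥ q) - q ⬝ᵥ L *ᵥ q ≤ β ⬝ᵥ p := by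
  have h := hL.dotProduct_mulVec_nonneg (q - p)
  rw [star_trivial, mulVec_sub, dotProduct_sub, sub_dotProduct, sub_dotProduct,
    hL.isHermitian.dotProduct_mulVec_comm q p] at h
  rw [← hp, dotProduct_comm (L *ᵥ p) q, hL.isHermitian.dotProduct_mulVec_comm q p,
    dotProduct_comm (L *ᵥ p) p]
  linarith

end PseudoInverse

variable [DecidableEq V]

lemma incv_swap (x y : V) : incv y x = -incv x y := by
  funext w
  simp only [incv, Pi.neg_apply]
  ring

lemma incv_add_incv (x y z : V) : incv x y + incv y z = incv x z := by
  funext w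
  simp only [incv, Pi.add_apply]
  ring

lemma incv_self (x : V) : incv x x = 0 := by
  funext w
  simp [incv]

variable [Fintype V]

lemma incv_dotProduct (x y : V) (g : V → ℝ) : incv x y ⬝ᵥ g = g x - g y := by
  simp [incv, dotProduct, sub_mul, Finset.sum_sub_distrib, ite_mul]

lemma sum_incv (x y : V) : ∑ w, incv x y w = 0 := by
  simp [incv, Finset.sum_sub_distrib]

def reff (M : Matrix V V ℝ) (x y : V) : ℝ := incv x y ⬝ᵥ M *ᵥ incv x y

lemma reff_self (M : Matrix V V ℝ) (x : V) : reff M x x = 0 := by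
  simp [reff, incv_self]

lemma reff_comm (M : Matrix V V ℝ) (x y : V) : reff M x y = reff M y x := by
  simp only [reff, incv_swap y x, mulVec_neg, dotProduct_neg, neg_dotProduct, neg_neg]

lemma two_mul_incv_dotProduct_mulVec {L M : Matrix V V ℝ} (hL : L.IsHermitian)
    (hM : ∀ β : V → ℝ, ∑ v, β v = 0 → L *ᵥ M *ᵥ β = β) (x y z : V) :
    2 * (incv x y ⬝ᵥ M *ᵥ incv x z) = reff M x y + reff M x z - reff M y z := by
  obtain ⟨p₁, hp₁⟩ : ∃ p, M *ᵥ incv x y = p := ⟨_, rfl⟩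
  obtain ⟨p₂, hp₂⟩ : ∃ p, M *ᵥ incv y z = p := ⟨_, rfl⟩
  have hLp₁ : incv x y = L *ᵥ p₁ := by rw [← hp₁, hM _ (sum_incv x y)]
  have hLp₂ : incv y z = L *ᵥ p₂ := by rw [← hp₂, hM _ (sum_incv y z)]
  have hsymm : L *ᵥ p₂ ⬝ᵥ p₁ = L *ᵥ p₁ ⬝ᵥ p₂ := by
    rw [dotProduct_comm, hL.dotProduct_mulVec_comm, dotProduct_comm]
  simp only [reff, ← incv_add_incv x y z, mulVec_add, hp₁, hp₂]
  rw [hLp₁, hLp₂]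
  simp only [add_dotProduct, dotProduct_add]
  linarith

section Laplacian

variable {E : Type*} [Fintype E] (a b : E → V) (c : E → ℝ)

lemma dotProduct_lapM_mulVec (x y : V → ℝ) :
    x ⬝ᵥ lapM a b c *ᵥ y = ∑ e, c e * (x (a e) - x (b e)) * (y (a e) - y (b e)) := by
  rw [dotProduct_comm]
  simp only [lapM, sum_mulVec, smul_mulVec, vecMulVec_mulVec, op_smul_eq_smul, sum_dotProduct,
    smul_dotProduct, smul_eq_mul, incv_dotProduct]
  exact Finset.sum_congr rfl fun e _ => by ring

lemma lapM_mulVec_one : lapM a b c *ᵥ 1 = 0 := by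
  simp [lapM, sum_mulVec, smul_mulVec, vecMulVec_mulVec, incv_dotProduct]

lemma posSemidef_lapM (hc : ∀ e, 0 ≤ c e) : (lapM a b c).PosSemidef := by
  refine .of_dotProduct_mulVec_nonneg ?_ fun x => ?_
  · rw [isHermitian_iff_isSymm]
    simp [IsSymm, lapM, transpose_sum, transpose_smul, transpose_vecMulVec]
  · rw [star_trivial, dotProduct_lapM_mulVec]
    exact Finset.sum_nonneg fun e _ => by
      rw [mul_assoc]
      exact mul_nonneg (hc e) (mul_self_nonneg _)

lemma dotProduct_lapM_comp_mulVec {W : Type*} [Fintype W] [DecidableEq W] (π : V → W)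
    (x : W → ℝ) : (x ∘ π) ⬝ᵥ lapM a b c *ᵥ (x ∘ π)
      = x ⬝ᵥ lapM (fun e => π (a e)) (fun e => π (b e)) c *ᵥ x := by
  simp only [dotProduct_lapM_mulVec, Function.comp_apply]

lemma LapConnected.lapM_comp {W : Type*} [Fintype W] [DecidableEq W]
    (hc : ∀ e, 0 ≤ c e) (hconn : LapConnected (lapM a b c))
    {π : V → W} (hπ : Function.Surjective π) :
    LapConnected (lapM (fun e => π (a e)) (fun e => π (b e)) c) := by
  intro x hx
  have hxπ : lapM a b c *ᵥ (x ∘ π) = 0 := by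
    rw [← (posSemidef_lapM a b c hc).dotProduct_mulVec_zero_iff, star_trivial,
      dotProduct_lapM_comp_mulVec, hx, dotProduct_zero]
  obtain ⟨k, hk⟩ := hconn _ hxπ
  exact ⟨k, hπ.forall.2 hk⟩

lemma dotProduct_lapM_mulVec_clampedPotential_le (hc : ∀ e, 0 ≤ c e) (lo hi : ℝ) (p : V → ℝ) :
    clampedPotential lo hi p ⬝ᵥ lapM a b c *ᵥ clampedPotential lo hi p
      ≤ clampedPotential lo hi p ⬝ᵥ lapM a b c *ᵥ p := by
  simp only [dotProduct_lapM_mulVec, mul_assoc]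
  refine Finset.sum_le_sum fun e _ => mul_le_mul_of_nonneg_left ?_ (hc e)
  rw [← sq]
  exact clamp_sub_sq_le lo hi (p (a e)) (p (b e))

end Laplacian

theorem exists_potential_of_well_separated {E : Type*} [Fintype E] {a b : E → V} {c : E → ℝ}
    (hc : ∀ e, 0 ≤ c e) {M : Matrix V V ℝ}
    (hM : ∀ β : V → ℝ, ∑ v, β v = 0 → lapM a b c *ᵥ M *ᵥ β = β)
    {C₁ C₂ : Finset V} {u v : V} (hu : u ∈ C₁) (hv : v ∈ C₂) {R γ : ℝ} (hγ : 1 ≤ γ)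
    (hd₁ : ∀ x ∈ C₁, reff M u x ≤ R) (hd₂ : ∀ y ∈ C₂, reff M y v ≤ R)
    (hcross₁ : ∀ x ∈ C₁, γ * R ≤ reff M x v) (hcross₂ : ∀ y ∈ C₂, γ * R ≤ reff M u y) :
    ∃ f : V → ℝ, (∀ x ∈ C₁, f x = f u) ∧ (∀ y ∈ C₂, f y = f v) ∧
      f ⬝ᵥ lapM a b c *ᵥ f ≤ f u - f v ∧ (γ - 1) * R ≤ f u - f v := by
  have hL := (posSemidef_lapM a b c hc).isHermitian
  have hR : 0 ≤ R := reff_self M u ▸ hd₁ u hu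
  obtain ⟨p, hp⟩ : ∃ p, M *ᵥ incv u v = p := ⟨_, rfl⟩
  have hLp : lapM a b c *ᵥ p = incv u v := hp ▸ hM _ (sum_incv u v)
  have hr : reff M u v = p u - p v := by rw [reff, hp, incv_dotProduct]
  set D := (R + (p u - p v) - γ * R) / 2 with hD
  have hC₁ : ∀ x ∈ C₁, p u - D ≤ p x := by
    intro x hx
    have := two_mul_incv_dotProduct_mulVec hL hM u x v
    rw [hp, incv_dotProduct] at this
    linarith [hd₁ x hx, hcross₁ x hx]
  have hC₂ : ∀ y ∈ C₂, p y ≤ p v + D := by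
    intro y hy
    have := two_mul_incv_dotProduct_mulVec hL hM v y u
    rw [reff_comm M v y, reff_comm M v u, reff_comm M y u, incv_swap u v, mulVec_neg,
      dotProduct_neg, hp, incv_dotProduct] at this
    linarith [hd₂ y hy, hcross₂ y hy]
  have hlohi : p v + D ≤ p u - D := by nlinarith [mul_nonneg (sub_nonneg.2 hγ) hR]
  set f := clampedPotential (p v + D) (p u - D) p
  have hf₁ : ∀ x ∈ C₁, f x = p u - D := fun x hx => clampedPotential_eq_hi (hC₁ x hx)
  have hf₂ : ∀ y ∈ C₂, f y = p v + D := fun y hy => clampedPotential_eq_lo hlohi (hC₂ y hy)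
  refine ⟨f, fun x hx => by rw [hf₁ x hx, hf₁ u hu], fun y hy => by rw [hf₂ y hy, hf₂ v hv],
    ?_, ?_⟩
  · calc f ⬝ᵥ lapM a b c *ᵥ f ≤ f ⬝ᵥ lapM a b c *ᵥ p :=
          dotProduct_lapM_mulVec_clampedPotential_le a b c hc _ _ p
      _ = f u - f v := by rw [hLp, dotProduct_comm, incv_dotProduct]
  · rw [hf₁ u hu, hf₂ v hv]
    linarith

end Resistance

theorem reff_identified_well_separated_clusters_general
    {V W E : Type*} [Fintype V] [DecidableEq V] [Fintype W] [DecidableEq W] [Fintype E]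
    (a b : E → V) (c : E → ℝ) (hc : ∀ e, 0 < c e)
    (hconn : LapConnected (lapM a b c))
    (Lp : Matrix V V ℝ) (hLp : IsMPInv (lapM a b c) Lp)
    (C1 C2 : Finset V) (h1 : C1.Nonempty) (h2 : C2.Nonempty)
    (R γ : ℝ) (hγ : 4 < γ)
    (hd1 : ∀ x ∈ C1, ∀ y ∈ C1, incv x y ⬝ᵥ Lp.mulVec (incv x y) ≤ R)
    (hd2 : ∀ x ∈ C2, ∀ y ∈ C2, incv x y ⬝ᵥ Lp.mulVec (incv x y) ≤ R)
    (hcross : ∀ x ∈ C1, ∀ y ∈ C2, γ * R ≤ incv x y ⬝ᵥ Lp.mulVec (incv x y))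
    (π : V → W) (s t : W) (hπsurj : Function.Surjective π)
    (hs : ∀ x, π x = s ↔ x ∈ C1) (ht : ∀ x, π x = t ↔ x ∈ C2)
    (hπ : ∀ x y, π x = π y ↔ (x = y ∨ (x ∈ C1 ∧ y ∈ C1) ∨ (x ∈ C2 ∧ y ∈ C2)))
    (LpJ : Matrix W W ℝ)
    (hLpJ : IsMPInv (lapM (fun e => π (a e)) (fun e => π (b e)) c) LpJ) :
    (γ - 4) * R ≤ incv s t ⬝ᵥ LpJ.mulVec (incv s t) := by
  obtain ⟨u, hu⟩ := h1
  obtain ⟨v, hv⟩ := h2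
  have hc₀ : ∀ e, 0 ≤ c e := fun e => (hc e).le
  have hLJ := posSemidef_lapM (fun e => π (a e)) (fun e => π (b e)) c hc₀
  obtain ⟨f, hf₁, hf₂, hf_energy, hf_drop⟩ := exists_potential_of_well_separated hc₀
    (fun β hβ => hLp.mulVec_mulVec_of_sum_eq_zero (posSemidef_lapM a b c hc₀) hconn
      (lapM_mulVec_one a b c) hβ)
    hu hv (by linarith : 1 ≤ γ) (hd1 u hu) (fun y hy => hd2 y hy v hv)
    (fun x hx => hcross x hx v hv) (hcross u hu)
  have hfπ : f.FactorsThrough π := by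
    intro x y hxy
    rcases (hπ x y).1 hxy with rfl | ⟨hx, hy⟩ | ⟨hx, hy⟩
    · rfl
    · rw [hf₁ x hx, hf₁ y hy]
    · rw [hf₂ x hx, hf₂ y hy]
  set q := Function.extend π f 0
  have hqπ : q ∘ π = f := funext (hfπ.extend_apply 0)
  have hq_st : incv s t ⬝ᵥ q = f u - f v := by
    rw [incv_dotProduct, ← (hs u).2 hu, ← (ht v).2 hv, ← hqπ]
    rfl
  have hq_energy : q ⬝ᵥ lapM (fun e => π (a e)) (fun e => π (b e)) c *ᵥ q
      = f ⬝ᵥ lapM a b c *ᵥ f := by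
    rw [← dotProduct_lapM_comp_mulVec, hqπ]
  have hdual := two_mul_dotProduct_sub_le hLJ
    (hLpJ.mulVec_mulVec_of_sum_eq_zero hLJ (hconn.lapM_comp a b c hc₀ hπsurj)
      (lapM_mulVec_one _ _ c) (sum_incv s t)) q
  have hR : 0 ≤ R := reff_self Lp u ▸ hd1 u hu u hu
  linarith

/-- **Resistance between identified well-separated clusters.**  If `C1` and
`C2` both have effective resistance diameter at most `R` and are at effective
resistance distance at least `γR` (`γ > 4`), then after identifying `C1` to `s`
and `C2` to `t` the effective resistance between `s` and `t` is at least
`(γ-4)R`. -/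
theorem reff_identified_well_separated_clusters
    {V W E : Type*} [Fintype V] [DecidableEq V] [Fintype W] [DecidableEq W] [Fintype E]
    (a b : E → V) (c : E → ℝ) (hc : ∀ e, 0 < c e)
    (hconn : LapConnected (lapM a b c))
    (Lp : Matrix V V ℝ) (hLp : IsMPInv (lapM a b c) Lp)
    (C1 C2 : Finset V) (hdis : Disjoint C1 C2) (h1 : C1.Nonempty) (h2 : C2.Nonempty)
    (R γ : ℝ) (hγ : 4 < γ)
    (hd1 : ∀ x ∈ C1, ∀ y ∈ C1, incv x y ⬝ᵥ Lp.mulVec (incv x y) ≤ R)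
    (hd2 : ∀ x ∈ C2, ∀ y ∈ C2, incv x y ⬝ᵥ Lp.mulVec (incv x y) ≤ R)
    (hcross : ∀ x ∈ C1, ∀ y ∈ C2, γ * R ≤ incv x y ⬝ᵥ Lp.mulVec (incv x y))
    (π : V → W) (s t : W) (hπsurj : Function.Surjective π)
    (hs : ∀ x, π x = s ↔ x ∈ C1) (ht : ∀ x, π x = t ↔ x ∈ C2)
    (hπ : ∀ x y, π x = π y ↔ (x = y ∨ (x ∈ C1 ∧ y ∈ C1) ∨ (x ∈ C2 ∧ y ∈ C2)))
    (LpJ : Matrix W W ℝ)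
    (hLpJ : IsMPInv (lapM (fun e => π (a e)) (fun e => π (b e)) c) LpJ) :
    (γ - 4) * R ≤ incv s t ⬝ᵥ LpJ.mulVec (incv s t) :=
  reff_identified_well_separated_clusters_general a b c hc hconn Lp hLp C1 C2 h1 h2 R γ hγ hd1 hd2
    hcross π s t hπsurj hs ht hπ LpJ hLpJ
end

section
/- (Flow decomposition of potential drops across a cut) Let G be a connected weighted graph, Y ⊆ V(G), X = V(G) \ Y, e an edge with both endpoints in X, s ∈ X, and t ∈ Y. Then |b_{st}^T L_G^+ b_e| ≤ sum over edges f = {p,q} ∈ E(Y,X) (with q ∈ X) of |b_{sq}^T L_G^+ b_e| * |b_{st}^T L_{G/X}^+ b_f| / r_f, where G/X denotes G with X identified to one vertex. -/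
open Matrix

section aux

set_option linter.unusedSectionVars false

variable {V E : Type*} [Fintype V] [DecidableEq V] [Fintype E]

lemma incv_dot (x y : V) (w : V → ℝ) : incv x y ⬝ᵥ w = w x - w y := by
  simp [incv, dotProduct, sub_mul, Finset.sum_sub_distrib, ite_mul]

lemma incv_sum (x y : V) : ∑ v, incv x y v = 0 := by
  simp [incv, Finset.sum_sub_distrib]

lemma lapM_mulVec (a b : E → V) (c : E → ℝ) (z : V → ℝ) :
    (lapM a b c).mulVec z
      = ∑ f, (c f * (incv (a f) (b f) ⬝ᵥ z)) • incv (a f) (b f) := by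
  ext v
  simp only [lapM, Matrix.mulVec, dotProduct, Finset.sum_apply, Matrix.smul_apply,
    Matrix.sum_apply, vecMulVec_apply, smul_eq_mul, Finset.sum_mul, Pi.smul_apply]
  rw [Finset.sum_comm]
  refine Finset.sum_congr rfl fun f _ => ?_
  simp only [smul_eq_mul, dotProduct, Finset.mul_sum, Finset.sum_mul]
  exact Finset.sum_congr rfl fun w _ => by ring

lemma dot_lapM (a b : E → V) (c : E → ℝ) (y z : V → ℝ) :
    y ⬝ᵥ (lapM a b c).mulVec z
      = ∑ f, c f * ((y (a f) - y (b f)) * (z (a f) - z (b f))) := by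
  rw [lapM_mulVec]
  have hswap : y ⬝ᵥ (∑ f, (c f * (incv (a f) (b f) ⬝ᵥ z)) • incv (a f) (b f))
      = ∑ f, y ⬝ᵥ ((c f * (incv (a f) (b f) ⬝ᵥ z)) • incv (a f) (b f)) := by
    simp only [dotProduct, Finset.sum_apply, Pi.smul_apply, smul_eq_mul, Finset.mul_sum]
    exact Finset.sum_comm
  rw [hswap]
  refine Finset.sum_congr rfl fun f _ => ?_
  rw [dotProduct_smul, smul_eq_mul, dotProduct_comm y, incv_dot, incv_dot]
  ring

lemma lapM_transpose (a b : E → V) (c : E → ℝ) : (lapM a b c)ᵀ = lapM a b c := by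
  unfold lapM
  rw [Matrix.transpose_sum]
  refine Finset.sum_congr rfl fun f _ => ?_
  rw [Matrix.transpose_smul]
  congr 1
  ext i j
  simp [vecMulVec_apply, mul_comm]

lemma lapM_mulVec_one_s16 (a b : E → V) (c : E → ℝ) :
    (lapM a b c).mulVec (fun _ => (1:ℝ)) = 0 := by
  rw [lapM_mulVec]
  refine Finset.sum_eq_zero fun f _ => ?_
  rw [incv_dot]
  simp

lemma mp_unique {n : Type*} [Fintype n] {L M N : Matrix n n ℝ}
    (hM : IsMPInv L M) (hN : IsMPInv L N) : M = N := by
  obtain ⟨m1, m2, m3, m4⟩ := hM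
  obtain ⟨n1, n2, n3, n4⟩ := hN
  have h1 : L * M = L * N := by
    calc L * M = (L * N * L) * M := by rw [n1]
    _ = (L * N) * (L * M) := by rw [Matrix.mul_assoc]
    _ = (L * N)ᵀ * (L * M)ᵀ := by rw [n3, m3]
    _ = Nᵀ * (Lᵀ * Mᵀ * Lᵀ) := by
        simp [Matrix.transpose_mul, Matrix.mul_assoc]
    _ = Nᵀ * (L * M * L)ᵀ := by simp [Matrix.transpose_mul, Matrix.mul_assoc]
    _ = Nᵀ * Lᵀ := by rw [m1]
    _ = (L * N)ᵀ := by rw [Matrix.transpose_mul]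
    _ = L * N := n3
  have h2 : M * L = N * L := by
    calc M * L = M * (L * N * L) := by rw [n1]
    _ = (M * L) * (N * L) := by simp [Matrix.mul_assoc]
    _ = (M * L)ᵀ * (N * L)ᵀ := by rw [m4, n4]
    _ = (Lᵀ * Mᵀ * Lᵀ) * Nᵀ := by simp [Matrix.transpose_mul, Matrix.mul_assoc]
    _ = (L * M * L)ᵀ * Nᵀ := by simp [Matrix.transpose_mul, Matrix.mul_assoc]
    _ = Lᵀ * Nᵀ := by rw [m1]
    _ = (N * L)ᵀ := by rw [Matrix.transpose_mul]
    _ = N * L := n4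
  calc M = M * L * M := m2.symm
  _ = N * L * M := by rw [h2]
  _ = N * (L * M) := by rw [Matrix.mul_assoc]
  _ = N * (L * N) := by rw [h1]
  _ = N * L * N := by rw [Matrix.mul_assoc]
  _ = N := n2

lemma mp_symm {n : Type*} [Fintype n] {L M : Matrix n n ℝ}
    (hL : Lᵀ = L) (hM : IsMPInv L M) : Mᵀ = M := by
  refine mp_unique ?_ hM
  obtain ⟨m1, m2, m3, m4⟩ := hM
  refine ⟨?_, ?_, ?_, ?_⟩
  · have key : (L * Mᵀ * L)ᵀ = L := by
      rw [Matrix.transpose_mul, Matrix.transpose_mul, Matrix.transpose_transpose, hL,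
        ← Matrix.mul_assoc, m1]
    rw [← Matrix.transpose_transpose (L * Mᵀ * L), key, hL]
  · have key : (Mᵀ * L * Mᵀ)ᵀ = M := by
      simp only [Matrix.transpose_mul, Matrix.transpose_transpose, hL, ← Matrix.mul_assoc]
      exact m2
    rw [← Matrix.transpose_transpose (Mᵀ * L * Mᵀ), key]
  · have e1 : (L * Mᵀ)ᵀ = M * L := by
      rw [Matrix.transpose_mul, Matrix.transpose_transpose, hL]
    have e2 : L * Mᵀ = M * L := by
      conv_lhs => rw [← hL]
      rw [← Matrix.transpose_mul, m4]
    rw [e1, e2]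
  · have e1 : (Mᵀ * L)ᵀ = L * M := by
      rw [Matrix.transpose_mul, Matrix.transpose_transpose, hL]
    have e2 : Mᵀ * L = L * M := by
      conv_lhs => rw [← hL]
      rw [← Matrix.transpose_mul, m3]
    rw [e1, e2]

lemma mp_proj {n : Type*} [Fintype n] [Nonempty n] {L M : Matrix n n ℝ}
    (hL : Lᵀ = L) (hM : IsMPInv L M) (hker : LapConnected L)
    (hone : L.mulVec (fun _ => 1) = 0)
    (x : n → ℝ) (hx : ∑ v, x v = 0) :
    L.mulVec (M.mulVec x) = x := by
  have hMsym := mp_symm hL hM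
  have hcomm : L * M = M * L := by
    rw [← hM.2.2.1, Matrix.transpose_mul, hMsym, hL]
  have hLLM : L * (L * M) = L := by
    rw [hcomm, ← Matrix.mul_assoc, hM.1]
  set w : n → ℝ := L.mulVec (M.mulVec x) with hw
  have hz : L.mulVec (x - w) = 0 := by
    rw [Matrix.mulVec_sub]
    have : L.mulVec w = L.mulVec x := by
      have hLLM' : L * L * M = L := by rw [Matrix.mul_assoc]; exact hLLM
      rw [hw, Matrix.mulVec_mulVec, Matrix.mulVec_mulVec, hLLM']
    rw [this]
    simp
  obtain ⟨c, hc⟩ := hker _ hz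
  have hsumw : ∑ v, w v = 0 := by
    have h1 : ∑ v, w v = (fun _ => (1:ℝ)) ⬝ᵥ L.mulVec (M.mulVec x) := by
      simp [dotProduct, hw]
    rw [h1, Matrix.dotProduct_mulVec]
    have h2 : (fun _ => (1:ℝ)) ᵥ* L = 0 := by
      rw [← Matrix.mulVec_transpose, hL, hone]
    rw [h2, zero_dotProduct]
  have hsumz : ∑ v, (x - w) v = 0 := by
    simp only [Pi.sub_apply, Finset.sum_sub_distrib, hx, hsumw, sub_zero]
  have hc0 : c = 0 := by
    have : ∑ v, (x - w) v = (Fintype.card n : ℝ) * c := by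
      rw [Finset.sum_congr rfl fun v _ => hc v]
      simp [Finset.sum_const, Finset.card_univ, mul_comm]
    rw [hsumz] at this
    have hcard : (0:ℝ) < (Fintype.card n : ℝ) := by
      exact_mod_cast Fintype.card_pos
    nlinarith
  funext v
  have hv := hc v
  rw [hc0] at hv
  simp only [Pi.sub_apply] at hv
  have : w v = x v := by linarith
  exact this

end aux

/-- **Flow decomposition of potential drops across a cut.**  For an edge `e`
inside `X = V \ Y`, `s ∈ X` and `t ∈ Y`, the potential drop `b_{st}ᵀ L⁺ b_e` is
dominated by the flows on the cut edges between `Y` and `X`, weighted by the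
corresponding drops from their `X`-endpoints.  `G/X` (the graph with `X`
identified to one vertex) is presented through the surjection `π`. -/
theorem potential_drop_cut_decomposition
    {V W E : Type*} [Fintype V] [DecidableEq V] [Fintype W] [DecidableEq W]
    [Fintype E] [DecidableEq E]
    (a b : E → V) (r : E → ℝ) (hr : ∀ f, 0 < r f)
    (hconn : LapConnected (lapM a b fun f => (r f)⁻¹))
    (Y : Finset V) (s t : V) (hs : s ∉ Y) (ht : t ∈ Y)
    (e : E) (hea : a e ∉ Y) (heb : b e ∉ Y)
    (Lp : Matrix V V ℝ) (hLp : IsMPInv (lapM a b fun f => (r f)⁻¹) Lp)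
    (π : V → W) (hπsurj : Function.Surjective π)
    (hπ : ∀ x y, π x = π y ↔ (x = y ∨ (x ∉ Y ∧ y ∉ Y)))
    (LpW : Matrix W W ℝ)
    (hLpW : IsMPInv (lapM (fun f => π (a f)) (fun f => π (b f)) fun f => (r f)⁻¹) LpW) :
    |incv s t ⬝ᵥ Lp.mulVec (incv (a e) (b e))|
      ≤ ∑ f ∈ Finset.univ.filter
            (fun f : E => (a f ∈ Y ∧ b f ∉ Y) ∨ (a f ∉ Y ∧ b f ∈ Y)),
          |incv s (if a f ∈ Y then b f else a f) ⬝ᵥ Lp.mulVec (incv (a e) (b e))|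
            * |incv (π s) (π t) ⬝ᵥ LpW.mulVec (incv (π (a f)) (π (b f)))| / r f := by
  classical
  have : Nonempty V := ⟨s⟩
  have : Nonempty W := ⟨π s⟩
  set L : Matrix V V ℝ := lapM a b fun f => (r f)⁻¹ with hLdef
  set LW : Matrix W W ℝ :=
    lapM (fun f => π (a f)) (fun f => π (b f)) fun f => (r f)⁻¹ with hLWdef
  set h : V → ℝ := Lp.mulVec (incv (a e) (b e)) with hhdef
  set ψ : W → ℝ := LpW.mulVec (incv (π s) (π t)) with hψdef
  -- connectivity of the quotient graph
  have hconnW : LapConnected LW := by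
    intro x hx
    have h0 : x ⬝ᵥ LW.mulVec x = 0 := by rw [hx, dotProduct_zero]
    rw [hLWdef, dot_lapM] at h0
    have hq : ∀ f : E, x (π (a f)) = x (π (b f)) := by
      intro f
      have hnn : ∀ f ∈ Finset.univ,
          (0:ℝ) ≤ (r f)⁻¹ * ((x (π (a f)) - x (π (b f))) * (x (π (a f)) - x (π (b f)))) := by
        intro f _
        have := inv_pos.2 (hr f)
        nlinarith [sq_nonneg (x (π (a f)) - x (π (b f)))]
      have hterm := (Finset.sum_eq_zero_iff_of_nonneg hnn).1 h0 f (Finset.mem_univ f)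
      have hrf := inv_pos.2 (hr f)
      rcases mul_eq_zero.1 hterm with h' | h'
      · exact absurd h' hrf.ne'
      · exact sub_eq_zero.1 (mul_self_eq_zero.1 h')
    have hker : L.mulVec (fun v => x (π v)) = 0 := by
      rw [hLdef, lapM_mulVec]
      refine Finset.sum_eq_zero fun f _ => ?_
      rw [incv_dot]
      have : x (π (a f)) - x (π (b f)) = 0 := by rw [hq f]; ring
      rw [this, mul_zero, zero_smul]
    obtain ⟨c, hc⟩ := hconn _ hker
    exact ⟨c, fun w => by obtain ⟨v, rfl⟩ := hπsurj w; exact hc v⟩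
  -- the two projection identities
  have hLe : L.mulVec h = incv (a e) (b e) := by
    rw [hhdef]
    exact mp_proj (lapM_transpose a b _) hLp hconn (lapM_mulVec_one_s16 a b _)
      _ (incv_sum _ _)
  have hLWψ : LW.mulVec ψ = incv (π s) (π t) := by
    rw [hψdef]
    exact mp_proj (lapM_transpose _ _ _) hLpW hconnW (lapM_mulVec_one_s16 _ _ _)
      _ (incv_sum _ _)
  -- π combinatorics
  have hπab : π (a e) = π (b e) := (hπ _ _).2 (Or.inr ⟨hea, heb⟩)
  have hπY : ∀ u v : V, u ∈ Y → π u = π v → u = v := by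
    intro u v hu huv
    rcases (hπ u v).1 huv with h' | h'
    · exact h'
    · exact absurd hu h'.1
  -- the auxiliary potential on W
  set g : W → ℝ := fun w => if hw : ∃ v, v ∈ Y ∧ π v = w then h hw.choose else h s
    with hgdef
  have hgY : ∀ v ∈ Y, g (π v) = h v := by
    intro v hv
    have hw : ∃ v', v' ∈ Y ∧ π v' = π v := ⟨v, hv, rfl⟩
    rw [hgdef]
    simp only [dif_pos hw]
    have hspec := hw.choose_spec
    rw [hπY _ _ hspec.1 hspec.2]
  have hgX : ∀ v, v ∉ Y → g (π v) = h s := by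
    intro v hv
    have hw : ¬ ∃ v', v' ∈ Y ∧ π v' = π v := by
      rintro ⟨v', hv', hvv⟩
      rcases (hπ v' v).1 hvv with h' | h'
      · exact hv (h' ▸ hv')
      · exact h'.1 hv'
    rw [hgdef]
    simp only [dif_neg hw]
  -- the two summation identities
  have Eq1 : ∑ f, (r f)⁻¹ *
      (((fun v => ψ (π v)) (a f) - (fun v => ψ (π v)) (b f)) * (h (a f) - h (b f))) = 0 := by
    rw [← dot_lapM a b (fun f => (r f)⁻¹) (fun v => ψ (π v)) h, ← hLdef, hLe,
      dotProduct_comm, incv_dot]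
    simp [hπab]
  have Eq2 : ∑ f, (r f)⁻¹ *
      ((g (π (a f)) - g (π (b f))) * (ψ (π (a f)) - ψ (π (b f)))) = h s - h t := by
    rw [← dot_lapM (fun f => π (a f)) (fun f => π (b f)) (fun f => (r f)⁻¹) g ψ, ← hLWdef,
      hLWψ, dotProduct_comm, incv_dot, hgX s hs, hgY t ht]
  -- the flow decomposition
  set T : E → ℝ := fun f => (r f)⁻¹ *
    ((ψ (π (a f)) - ψ (π (b f))) * ((h (a f) - h (b f)) - (g (π (a f)) - g (π (b f)))))
    with hTdef
  have hTsum : ∑ f, T f = h t - h s := by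
    have : ∑ f, T f
        = (∑ f, (r f)⁻¹ *
            (((fun v => ψ (π v)) (a f) - (fun v => ψ (π v)) (b f)) * (h (a f) - h (b f))))
          - ∑ f, (r f)⁻¹ *
            ((g (π (a f)) - g (π (b f))) * (ψ (π (a f)) - ψ (π (b f)))) := by
      rw [← Finset.sum_sub_distrib]
      exact Finset.sum_congr rfl fun f _ => by rw [hTdef]; ring
    rw [this, Eq1, Eq2]; ring
  have hTzero : ∀ f ∈ Finset.univ, T f ≠ 0 →
      ((a f ∈ Y ∧ b f ∉ Y) ∨ (a f ∉ Y ∧ b f ∈ Y)) := by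
    intro f _ hT
    by_contra hcut
    apply hT
    show (r f)⁻¹ * ((ψ (π (a f)) - ψ (π (b f)))
      * ((h (a f) - h (b f)) - (g (π (a f)) - g (π (b f))))) = 0
    by_cases ha : a f ∈ Y <;> by_cases hb : b f ∈ Y
    · rw [hgY _ ha, hgY _ hb]; ring
    · exact absurd (Or.inl ⟨ha, hb⟩) hcut
    · exact absurd (Or.inr ⟨ha, hb⟩) hcut
    · have : π (a f) = π (b f) := (hπ _ _).2 (Or.inr ⟨ha, hb⟩)
      rw [this]; ring
  have hTfilter : ∑ f ∈ Finset.univ.filter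
      (fun f : E => (a f ∈ Y ∧ b f ∉ Y) ∨ (a f ∉ Y ∧ b f ∈ Y)), T f = h t - h s := by
    rw [Finset.sum_filter_of_ne hTzero, hTsum]
  -- symmetry of LpW
  have hsymW : LpWᵀ = LpW := mp_symm (lapM_transpose _ _ _) hLpW
  have hdW : ∀ f : E, incv (π s) (π t) ⬝ᵥ LpW.mulVec (incv (π (a f)) (π (b f)))
      = ψ (π (a f)) - ψ (π (b f)) := by
    intro f
    rw [Matrix.dotProduct_mulVec, ← Matrix.mulVec_transpose, hsymW, ← hψdef,
      dotProduct_comm, incv_dot]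
  -- finish
  have hstep1 : |incv s t ⬝ᵥ Lp.mulVec (incv (a e) (b e))| = |h s - h t| := by
    rw [← hhdef, incv_dot]
  rw [hstep1]
  have hstep2 : |h s - h t| = |∑ f ∈ Finset.univ.filter
      (fun f : E => (a f ∈ Y ∧ b f ∉ Y) ∨ (a f ∉ Y ∧ b f ∈ Y)), T f| := by
    rw [hTfilter, abs_sub_comm]
  rw [hstep2]
  refine le_trans (Finset.abs_sum_le_sum_abs _ _) (Finset.sum_le_sum ?_)
  intro f hf
  rw [Finset.mem_filter] at hf
  have hrf := hr f
  rcases hf.2 with ⟨ha, hb⟩ | ⟨ha, hb⟩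
  · -- a f ∈ Y, b f ∉ Y, q = b f
    rw [if_pos ha]
    have hbr : (h (a f) - h (b f)) - (g (π (a f)) - g (π (b f))) = h s - h (b f) := by
      rw [hgY _ ha, hgX _ hb]; ring
    rw [hTdef]
    simp only []
    rw [hbr, hdW f, incv_dot]
    rw [abs_mul, abs_mul, abs_inv, abs_of_pos hrf, div_eq_mul_inv]
    exact le_of_eq (by ring)
  · -- a f ∉ Y, b f ∈ Y, q = a f
    rw [if_neg ha]
    have hbr : (h (a f) - h (b f)) - (g (π (a f)) - g (π (b f))) = h (a f) - h s := by
      rw [hgX _ ha, hgY _ hb]; ring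
    rw [hTdef]
    simp only []
    rw [hbr, hdW f, incv_dot]
    rw [abs_mul, abs_mul, abs_inv, abs_of_pos hrf, abs_sub_comm (h (a f)) (h s),
      div_eq_mul_inv]
    exact le_of_eq (by ring)
end
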